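/- Functional equation for the maximal delta: assume f satisfies the Lagrange Property at x with Γ(0) ≠ 0 and Γ'(0) > 0. If ε > 0 is small and δ > 0 satisfies ε = δ·Γ(δ), then δ = Π_x^f(ε), the maximum of Δ_{f,x}(ε). -/
import Mathlib


/-- The set of suitable deltas for the triplet `(f, x, ε)`. -/
def Delta {X Y : Type*} [MetricSpace X] [MetricSpace Y] (f : X → Y) (x : X) (ε : ℝ) : Set ℝ :=
  {δ : ℝ | 0 < δ ∧ ∀ y, dist x y < δ → dist (f x) (f y) < ε}

/-- The set of Leibniz-ratio values of `f` at `x` over the punctured closed ball of radius `r`. -/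
def ratioSet {X Y : Type*} [MetricSpace X] [MetricSpace Y] (f : X → Y) (x : X) (r : ℝ) :
    Set ℝ :=
  {L : ℝ | ∃ y, y ≠ x ∧ dist x y ≤ r ∧ L = dist (f x) (f y) / dist x y}

theorem functional_equation_maximal_delta {X Y : Type*} [MetricSpace X] [MetricSpace Y]
    (f : X → Y) (x : X) (ζ : ℝ) (hζ : 0 < ζ) (Γ : ℝ → ℝ)
    (hΓreg : ContDiffOn ℝ 1 Γ (Set.Ioo (-ζ) ζ))
    (hΓsup : ∀ r ∈ Set.Ioo (0 : ℝ) ζ, IsGreatest (ratioSet f x r) (Γ r))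
    (hΓ0 : Γ 0 ≠ 0) (hΓ'0 : 0 < deriv Γ 0) :
    ∃ ε₀ > 0, ∀ ε ∈ Set.Ioo (0 : ℝ) ε₀, ∀ δ ∈ Set.Ioo (0 : ℝ) ζ,
      ε = δ * Γ δ → IsGreatest (Delta f x ε) δ := by
  -- Γ is monotone on (0, ζ)
  have hmono : ∀ r s : ℝ, 0 < r → r ≤ s → s < ζ → Γ r ≤ Γ s := by
    intro r s hr hrs hs
    obtain ⟨y, hyx, hyd, hye⟩ := (hΓsup r ⟨hr, lt_of_le_of_lt hrs hs⟩).1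
    exact (hΓsup s ⟨lt_of_lt_of_le hr hrs, hs⟩).2 ⟨y, hyx, hyd.trans hrs, hye⟩
  -- Γ is nonnegative on (0, ζ)
  have hnonneg : ∀ r : ℝ, 0 < r → r < ζ → 0 ≤ Γ r := by
    intro r h1 h2
    obtain ⟨y, hyx, hyd, hye⟩ := (hΓsup r ⟨h1, h2⟩).1
    rw [hye]
    positivity
  -- the derivative of Γ is positive near 0
  have hderivcont : ContinuousAt (deriv Γ) 0 := by
    have h := hΓreg.continuousOn_deriv_of_isOpen isOpen_Ioo le_rfl
    exact h.continuousAt (isOpen_Ioo.mem_nhds ⟨by linarith, hζ⟩)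
  have hev : ∀ᶠ s in nhds (0 : ℝ), 0 < deriv Γ s :=
    hderivcont.eventually (eventually_gt_nhds hΓ'0)
  obtain ⟨η', hη', hball⟩ := Metric.eventually_nhds_iff.mp hev
  set η : ℝ := min (η' / 2) (ζ / 2) with hηdef
  have hη0 : 0 < η := lt_min (by linarith) (by linarith)
  have hηζ : η < ζ := lt_of_le_of_lt (min_le_right _ _) (by linarith)
  have hηη' : η < η' := lt_of_le_of_lt (min_le_left _ _) (by linarith)
  have hsub : Set.Icc (0 : ℝ) η ⊆ Set.Ioo (-ζ) ζ := fun s hs =>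
    ⟨by linarith [hs.1], lt_of_le_of_lt hs.2 hηζ⟩
  -- Γ is strictly monotone on [0, η]
  have hSM : StrictMonoOn Γ (Set.Icc 0 η) := by
    apply strictMonoOn_of_deriv_pos (convex_Icc 0 η) (hΓreg.continuousOn.mono hsub)
    intro s hs
    rw [interior_Icc] at hs
    apply hball
    rw [Real.dist_eq, sub_zero, abs_of_pos hs.1]
    exact lt_trans hs.2 hηη'
  have hΓη : 0 < Γ η := by
    have h1 : Γ (η / 2) < Γ η :=
      hSM ⟨by linarith, by linarith⟩ ⟨hη0.le, le_rfl⟩ (by linarith)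
    have h2 : 0 ≤ Γ (η / 2) := hnonneg _ (by linarith) (by linarith)
    linarith
  refine ⟨η * Γ η, by positivity, ?_⟩
  intro ε hε δ hδ heq
  have hΓδ : 0 < Γ δ := by
    rcases (hnonneg δ hδ.1 hδ.2).lt_or_eq with h | h
    · exact h
    · exfalso
      rw [← h, mul_zero] at heq
      exact hε.1.ne' heq
  have hδη : δ < η := by
    by_contra hcon
    push_neg at hcon
    have h1 : Γ η ≤ Γ δ := hmono η δ hη0 hcon hδ.2
    have h2 : η * Γ η ≤ δ * Γ δ :=
      mul_le_mul hcon h1 hΓη.le (le_trans hη0.le hcon)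
    linarith [hε.2]
  constructor
  · -- membership: δ ∈ Delta f x ε
    refine ⟨hδ.1, fun y hy => ?_⟩
    rcases eq_or_ne y x with rfl | hyx
    · simpa using hε.1
    have ht0 : 0 < dist x y := dist_pos.2 (Ne.symm hyx)
    have htζ : dist x y < ζ := lt_trans hy hδ.2
    have hr : dist (f x) (f y) / dist x y ≤ Γ (dist x y) :=
      (hΓsup _ ⟨ht0, htζ⟩).2 ⟨y, hyx, le_rfl, rfl⟩
    have h2 : Γ (dist x y) ≤ Γ δ := hmono _ _ ht0 hy.le hδ.2
    rw [div_le_iff₀ ht0] at hr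
    calc dist (f x) (f y) ≤ Γ (dist x y) * dist x y := hr
      _ ≤ Γ δ * dist x y := mul_le_mul_of_nonneg_right h2 ht0.le
      _ < Γ δ * δ := mul_lt_mul_of_pos_left hy hΓδ
      _ = ε := by rw [heq]; ring
  · -- δ is an upper bound of Delta f x ε
    intro δ' hδ'
    by_contra hcon
    push_neg at hcon
    obtain ⟨hδ'0, hδ'p⟩ := hδ'
    set r : ℝ := (δ + min δ' η) / 2 with hrdef
    have hδmin : δ < min δ' η := lt_min hcon hδη
    have hr1 : δ < r := by rw [hrdef]; linarith
    have hr2 : r < min δ' η := by rw [hrdef]; linarith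
    have hrδ' : r < δ' := lt_of_lt_of_le hr2 (min_le_left _ _)
    have hrη : r < η := lt_of_lt_of_le hr2 (min_le_right _ _)
    have hrζ : r < ζ := lt_trans hrη hηζ
    have hr0 : 0 < r := lt_trans hδ.1 hr1
    obtain ⟨y, hyx, hyd, hye⟩ := (hΓsup r ⟨hr0, hrζ⟩).1
    have ht0 : 0 < dist x y := dist_pos.2 (Ne.symm hyx)
    have hΓt_le : Γ (dist x y) ≤ Γ r := hmono _ _ ht0 hyd hrζ
    have hΓt_ge : Γ r ≤ Γ (dist x y) :=
      (hΓsup _ ⟨ht0, lt_of_le_of_lt hyd hrζ⟩).2 ⟨y, hyx, le_rfl, hye⟩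
    have hteq : dist x y = r := by
      by_contra hne
      have htlt : dist x y < r := lt_of_le_of_ne hyd hne
      have := hSM ⟨ht0.le, le_of_lt (lt_of_lt_of_le htlt hrη.le)⟩
        ⟨hr0.le, hrη.le⟩ htlt
      linarith
    have hfd : dist (f x) (f y) = Γ r * dist x y := by
      rw [hye, div_mul_cancel₀ _ ht0.ne']
    have hlt : dist (f x) (f y) < ε := hδ'p y (by rw [hteq]; exact hrδ')
    have hΓδr : Γ δ ≤ Γ r := hmono δ r hδ.1 hr1.le hrζ
    nlinarith [mul_le_mul_of_nonneg_right hΓδr hr0.le,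
      mul_lt_mul_of_pos_left hr1 hΓδ]
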